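/- If f is a non-constant solution of {f,λ} = -2Q(λ) with Q holomorphic on a domain U, then f' vanishes nowhere on U; more generally, for the perturbed oscillator potential Q(λ) = 4λ³ - 2λz + 2zy - 4y³ + y'² + y'/(λ-y) + 3/(4(λ-y)²), the derivative of any meromorphic solution f of the Schwarzian equation vanishes only at the pole λ = y of the potential. -/

import Mathlib

/-!
If `f'` vanished at `z₀`, then, `f` being non-constant, the identity theorem would give
`f' = (λ - z₀) ^ (m + 1) * g` near `z₀` with `g z₀ ≠ 0`. In `f''' f' - (3/2) f''² = -2 Q f'²`
the left side is then `(λ - z₀) ^ (2 m) * (-(m + 1) (m + 3) / 2 * g z₀ ² + O(λ - z₀))`, while the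
right side is `O((λ - z₀) ^ (2 m + 2))`: a contradiction. The perturbed oscillator potential is
holomorphic away from its pole `λ = y`.
-/

/-- The perturbed cubic oscillator potential
Q(λ) = 4λ³ - 2λz + 2zy - 4y³ + y'² + y'/(λ-y) + 3/(4(λ-y)²). -/
noncomputable def perturbedPotential (y y' z lam : ℂ) : ℂ :=
  4 * lam ^ 3 - 2 * lam * z + 2 * z * y - 4 * y ^ 3 + y' ^ 2
    + y' / (lam - y) + 3 / (4 * (lam - y) ^ 2)

open Filter Topology Set

section

variable {𝕜 : Type*} [NontriviallyNormedField 𝕜]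

theorem hasDerivAt_sub_pow_mul {g : 𝕜 → 𝕜} {g' z₀ w : 𝕜} (n : ℕ) (hg : HasDerivAt g g' w) :
    HasDerivAt (fun w => (w - z₀) ^ n * g w)
      (n * (w - z₀) ^ (n - 1) * g w + (w - z₀) ^ n * g') w := by
  simpa using (((hasDerivAt_id w).sub_const z₀).fun_pow n).fun_mul hg

theorem mul_natCast_mul_pow_sub_one {R : Type*} [CommSemiring R] (x : R) (n : ℕ) :
    x * (n * x ^ (n - 1)) = n * x ^ n := by
  rcases eq_or_ne n 0 with rfl | hn
  · simp
  · rw [mul_left_comm, mul_pow_sub_one hn]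

variable [CompleteSpace 𝕜] {F g : 𝕜 → 𝕜} {z₀ : 𝕜}

theorem deriv_eventuallyEq_of_eventuallyEq_sub_pow_succ_mul (m : ℕ) (hg : AnalyticAt 𝕜 g z₀)
    (hF : ∀ᶠ w in 𝓝 z₀, F w = (w - z₀) ^ (m + 1) * g w) :
    ∀ᶠ w in 𝓝 z₀, deriv F w = (w - z₀) ^ m * ((m + 1) * g w + (w - z₀) * deriv g w) := by
  filter_upwards [EventuallyEq.deriv hF, hg.eventually_analyticAt] with w hFw hgw
  rw [hFw, (hasDerivAt_sub_pow_mul (m + 1) hgw.differentiableAt.hasDerivAt).deriv]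
  push_cast
  simp only [pow_succ]
  ring

theorem deriv_deriv_eventuallyEq_of_eventuallyEq_sub_pow_succ_mul (m : ℕ) (hg : AnalyticAt 𝕜 g z₀)
    (hF : ∀ᶠ w in 𝓝 z₀, F w = (w - z₀) ^ (m + 1) * g w) :
    ∀ᶠ w in 𝓝 z₀, deriv (deriv F) w =
      m * (w - z₀) ^ (m - 1) * ((m + 1) * g w + (w - z₀) * deriv g w)
        + (w - z₀) ^ m * ((m + 2) * deriv g w + (w - z₀) * deriv (deriv g) w) := by
  filter_upwards [EventuallyEq.deriv (deriv_eventuallyEq_of_eventuallyEq_sub_pow_succ_mul m hg hF),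
    hg.eventually_analyticAt, hg.deriv.eventually_analyticAt] with w hF'w hgw hg'w
  have hk : HasDerivAt (fun w => (m + 1) * g w + (w - z₀) * deriv g w)
      ((m + 2) * deriv g w + (w - z₀) * deriv (deriv g) w) w :=
    ((hgw.differentiableAt.hasDerivAt.const_mul ((m : 𝕜) + 1)).fun_add
      (((hasDerivAt_id' w).sub_const z₀).fun_mul hg'w.differentiableAt.hasDerivAt)).congr_deriv
      (by ring)
  rw [hF'w, (hasDerivAt_sub_pow_mul m hk).deriv]

variable [CharZero 𝕜]

theorem not_eventually_schwarzian_relation_of_eventuallyEq_sub_pow_succ_mul {Q : 𝕜 → 𝕜} (m : ℕ)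
    (hg : AnalyticAt 𝕜 g z₀) (hg₀ : g z₀ ≠ 0) (hQ : ContinuousAt Q z₀)
    (hF : ∀ᶠ w in 𝓝 z₀, F w = (w - z₀) ^ (m + 1) * g w) :
    ¬ ∀ᶠ w in 𝓝 z₀, deriv (deriv F) w * F w - 3 / 2 * deriv F w ^ 2 = -2 * Q w * F w ^ 2 := by
  intro hrel
  set k : 𝕜 → 𝕜 := fun w => (m + 1) * g w + (w - z₀) * deriv g w
  set B : 𝕜 → 𝕜 := fun w => m * k w * g w
    + (w - z₀) * ((m + 2) * deriv g w + (w - z₀) * deriv (deriv g) w) * g w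
    - 3 / 2 * k w ^ 2 + 2 * Q w * (w - z₀) ^ 2 * g w ^ 2
  have hB : B =ᶠ[𝓝[≠] z₀] fun _ => 0 := by
    filter_upwards [nhdsWithin_le_nhds (hF.and
      ((deriv_eventuallyEq_of_eventuallyEq_sub_pow_succ_mul m hg hF).and
      ((deriv_deriv_eventuallyEq_of_eventuallyEq_sub_pow_succ_mul m hg hF).and hrel))),
      self_mem_nhdsWithin] with w ⟨hFw, hF'w, hF''w, hrelw⟩ hw
    have : (w - z₀) ^ (2 * m + 1) * B w = 0 := by
      rw [hFw, hF'w, hF''w] at hrelw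
      linear_combination (w - z₀) * hrelw
        - k w * (w - z₀) ^ (m + 1) * g w * mul_natCast_mul_pow_sub_one (w - z₀) m
    exact (mul_eq_zero.mp this).resolve_left (pow_ne_zero _ (sub_ne_zero.mpr hw))
  have hBc : ContinuousAt B z₀ := by
    have := hg.continuousAt
    have := hg.deriv.continuousAt
    have := hg.deriv.deriv.continuousAt
    fun_prop
  have hB₀ : B z₀ = 0 :=
    ((hBc.eventuallyEq_nhds_iff_eventuallyEq_nhdsNE continuousAt_const).mp hB).eq_of_nhds
  have hB₀' : B z₀ = -((m + 1) * (m + 3) / 2) * g z₀ ^ 2 := by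
    simp only [B, k, sub_self]
    ring
  have hm : ((m : 𝕜) + 1) * (m + 3) ≠ 0 := by
    exact_mod_cast (by positivity : (m + 1) * (m + 3) ≠ 0)
  rw [hB₀'] at hB₀
  simp [hm, hg₀] at hB₀

theorem AnalyticAt.eventually_eq_zero_of_schwarzian_relation {Q : 𝕜 → 𝕜}
    (hF : AnalyticAt 𝕜 F z₀) (hQ : ContinuousAt Q z₀)
    (hrel : ∀ᶠ w in 𝓝 z₀, deriv (deriv F) w * F w - 3 / 2 * deriv F w ^ 2 = -2 * Q w * F w ^ 2)
    (h₀ : F z₀ = 0) : ∀ᶠ w in 𝓝 z₀, F w = 0 := by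
  by_contra hne
  obtain ⟨n, g, hg, hg₀, hFg⟩ := hF.exists_eventuallyEq_pow_smul_nonzero_iff.mpr hne
  simp only [smul_eq_mul] at hFg
  cases n with
  | zero => exact hg₀ (by simpa [h₀] using hFg.self_of_nhds.symm)
  | succ m =>
    exact not_eventually_schwarzian_relation_of_eventuallyEq_sub_pow_succ_mul m hg hg₀ hQ hFg hrel

end

theorem deriv_ne_zero_of_schwarzian_relation {𝕜 : Type*} [RCLike 𝕜] {U : Set 𝕜} {Q f : 𝕜 → 𝕜}
    (hU : IsOpen U) (hUc : IsPreconnected U) (hQ : ContinuousOn Q U) (hf : AnalyticOnNhd 𝕜 f U)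
    (hnc : ¬ ∀ z ∈ U, ∀ w ∈ U, f z = f w)
    (hrel : ∀ z ∈ U, iteratedDeriv 3 f z * deriv f z - 3 / 2 * iteratedDeriv 2 f z ^ 2
      = -2 * Q z * deriv f z ^ 2)
    {z₀ : 𝕜} (hz₀ : z₀ ∈ U) : deriv f z₀ ≠ 0 := by
  intro h₀
  have hrel' : ∀ᶠ w in 𝓝 z₀, deriv (deriv (deriv f)) w * deriv f w
      - 3 / 2 * deriv (deriv f) w ^ 2 = -2 * Q w * deriv f w ^ 2 := by
    filter_upwards [hU.mem_nhds hz₀] with w hw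
    simpa only [iteratedDeriv_succ, iteratedDeriv_zero] using hrel w hw
  have hloc : deriv f =ᶠ[𝓝 z₀] 0 := (hf.deriv z₀ hz₀).eventually_eq_zero_of_schwarzian_relation
    (hQ.continuousAt (hU.mem_nhds hz₀)) hrel' h₀
  have hzero : EqOn (deriv f) 0 U :=
    hf.deriv.eqOn_zero_of_preconnected_of_eventuallyEq_zero hUc hz₀ hloc
  exact hnc fun z hz w hw => hU.is_const_of_deriv_eq_zero hUc hf.differentiableOn hzero hz hw

theorem differentiableOn_perturbedPotential (y y' z : ℂ) :
    DifferentiableOn ℂ (perturbedPotential y y' z) {lam | lam ≠ y} := by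
  intro lam hlam
  have : lam - y ≠ 0 := sub_ne_zero.mpr hlam
  unfold perturbedPotential
  fun_prop (disch := simp [this])

/-- a non-constant solution of the Schwarzian equation {f,λ} = -2Q (written
with cleared denominators: f'''·f' - (3/2)·f''² = -2Q·f'²) with Q holomorphic has
nowhere-vanishing derivative; in particular, for the perturbed oscillator potential,
the derivative of any solution vanishes only at the pole λ = y of the potential. -/
theorem deriv_ne_zero_of_schwarzian_solution :
    (∀ (U : Set ℂ), IsOpen U → IsPreconnected U → ∀ (Q f : ℂ → ℂ),
      DifferentiableOn ℂ Q U → AnalyticOn ℂ f U →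
      (¬ ∀ z ∈ U, ∀ w ∈ U, f z = f w) →
      (∀ z ∈ U, iteratedDeriv 3 f z * deriv f z - (3 / 2) * (iteratedDeriv 2 f z) ^ 2
        = -2 * Q z * (deriv f z) ^ 2) →
      ∀ z ∈ U, deriv f z ≠ 0) ∧
    (∀ (y y' z : ℂ) (U : Set ℂ), IsOpen U → IsPreconnected U → U ⊆ {lam : ℂ | lam ≠ y} →
      ∀ f : ℂ → ℂ, AnalyticOn ℂ f U →
      (¬ ∀ lam ∈ U, ∀ mu ∈ U, f lam = f mu) →
      (∀ lam ∈ U, iteratedDeriv 3 f lam * deriv f lam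
          - (3 / 2) * (iteratedDeriv 2 f lam) ^ 2
        = -2 * perturbedPotential y y' z lam * (deriv f lam) ^ 2) →
      ∀ lam ∈ U, deriv f lam ≠ 0) := by
  constructor
  · intro U hU hUc Q f hQ hf hnc hrel z hz
    exact deriv_ne_zero_of_schwarzian_relation hU hUc hQ.continuousOn
      (hU.analyticOn_iff_analyticOnNhd.mp hf) hnc hrel hz
  · intro y y' z U hU hUc hUy f hf hnc hrel lam hlam
    exact deriv_ne_zero_of_schwarzian_relation hU hUc
      ((differentiableOn_perturbedPotential y y' z).mono hUy).continuousOn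
      (hU.analyticOn_iff_analyticOnNhd.mp hf) hnc hrel hlam
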